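/- arXiv:2208.09328 — 5 statements merged into one kernel-verified Lean document; each statement's English description precedes it below -/
import Mathlib

section
/- Primal part of the KKT solution of the consensus optimization problem: if (ξ*, λ*) ∈ R^{Nn} × R^{Nn} satisfy −𝐇ᵀ S⁻¹ (z − 𝐇 ξ*) + (L⊗I_n) λ* = 0 and (L⊗I_n) ξ* = 0, where 𝐇 = diag{H_1,...,H_N} is block diagonal with each H_i of full column rank and S = diag{S_1,...,S_N} positive definite, then ξ* = 1_N ⊗ ξ† where ξ† = H⁻¹_cons Σ_i H_iᵀ S_i⁻¹ z_i and H_cons = Σ_i H_iᵀ S_i⁻¹ H_i. -/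
/-!
Feasibility says that every coordinate slice `j ↦ ξ*(j, k)` lies in `ker L = span 1`, so all
agents hold one and the same vector `ξ`. Since `L` is symmetric, `1ᵀ L = 0`, so summing the
blocks of the stationarity equation over the agents kills the dual term `(L ⊗ I) λ*` and leaves
the normal equations `H_cons ξ = Σ_i H_iᵀ S_i⁻¹ z_i`.
-/

open Matrix
open scoped Kronecker BigOperators

namespace Matrix

variable {R ι κ ι' o : Type*} {m' n' : o → Type*}

theorem kronecker_one_mulVec_apply [CommSemiring R] [Fintype ι] [Fintype κ] [DecidableEq κ]
    (A : Matrix ι' ι R) (x : ι × κ → R) (i : ι') (k : κ) :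
    ((A ⊗ₖ (1 : Matrix κ κ R)) *ᵥ x) (i, k) = (A *ᵥ fun j => x (j, k)) i := by
  simp [mulVec, dotProduct, Fintype.sum_prod_type, one_apply]

theorem exists_forall_curry_eq_of_kronecker_one_mulVec_eq_zero [CommSemiring R] [Fintype ι]
    [Fintype κ] [DecidableEq κ] {A : Matrix ι' ι R}
    (hA : ∀ v, A *ᵥ v = 0 → ∃ c : R, v = fun _ => c)
    {x : ι × κ → R} (hx : (A ⊗ₖ (1 : Matrix κ κ R)) *ᵥ x = 0) :
    ∃ ξ : κ → R, ∀ i, (fun k => x (i, k)) = ξ := by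
  have hslice : ∀ k, ∃ c : R, (fun j => x (j, k)) = fun _ => c := fun k =>
    hA _ <| funext fun i => by rw [← kronecker_one_mulVec_apply, hx]; rfl
  choose ξ hξ using hslice
  exact ⟨ξ, fun i => funext fun k => congrFun (hξ k) i⟩

theorem sum_mulVec_eq_zero_of_vecMul_eq_zero [Semiring R] [Fintype ι] [Fintype ι']
    {A : Matrix ι' ι R} (hA : 1 ᵥ* A = 0) (v : ι → R) : ∑ i, (A *ᵥ v) i = 0 := by
  rw [← one_dotProduct, dotProduct_mulVec, hA, zero_dotProduct]

theorem sum_kronecker_one_mulVec_eq_zero [CommSemiring R] [Fintype ι] [Fintype ι'] [Fintype κ]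
    [DecidableEq κ] {A : Matrix ι' ι R} (hA : 1 ᵥ* A = 0) (x : ι × κ → R) :
    ∑ i, (fun k => ((A ⊗ₖ (1 : Matrix κ κ R)) *ᵥ x) (i, k)) = 0 := by
  ext k
  simp only [Finset.sum_apply, kronecker_one_mulVec_apply, sum_mulVec_eq_zero_of_vecMul_eq_zero hA,
    Pi.zero_apply]

theorem blockDiagonal'_mulVec_apply [NonUnitalNonAssocSemiring R] [Fintype o] [DecidableEq o]
    [∀ i, Fintype (n' i)] (M : ∀ i, Matrix (m' i) (n' i) R) (x : (Σ i, n' i) → R) (i : o) :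
    (fun l => (blockDiagonal' M *ᵥ x) ⟨i, l⟩) = M i *ᵥ fun l => x ⟨i, l⟩ := by
  ext l
  simp only [mulVec, dotProduct, ← Finset.univ_sigma_univ, Finset.sum_sigma]
  rw [Finset.sum_eq_single i]
  · simp [blockDiagonal'_apply_eq]
  · intro j _ hj
    simp [blockDiagonal'_apply_ne _ _ _ (Ne.symm hj)]
  · simp

theorem inv_blockDiagonal' [CommRing R] [Fintype o] [DecidableEq o] [∀ i, Fintype (m' i)]
    [∀ i, DecidableEq (m' i)] (M : ∀ i, Matrix (m' i) (m' i) R) (hM : ∀ i, IsUnit (M i).det) :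
    (blockDiagonal' M)⁻¹ = blockDiagonal' fun i => (M i)⁻¹ := by
  refine inv_eq_right_inv ?_
  rw [← blockDiagonal'_mul, ← blockDiagonal'_one]
  congr 1
  ext1 i
  exact mul_nonsing_inv _ (hM i)

/-- `diag(M_1, …, M_N)` with the columns indexed by `o × κ` rather than by `Σ _ : o, κ`. -/
def blockDiagonalProd [Zero R] [DecidableEq o] (M : ∀ i, Matrix (m' i) κ R) :
    Matrix (Σ i, m' i) (o × κ) R :=
  (blockDiagonal' M).submatrix id (Equiv.sigmaEquivProd o κ).symm

theorem blockDiagonalProd_eq [Zero R] [DecidableEq o] (M : ∀ i, Matrix (m' i) κ R) :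
    blockDiagonalProd M = fun p q => if p.1 = q.1 then M p.1 p.2 q.2 else 0 := by
  ext p q
  simp [blockDiagonalProd, blockDiagonal'_apply]

theorem blockDiagonalProd_mulVec_apply [NonUnitalNonAssocSemiring R] [Fintype o] [DecidableEq o]
    [Fintype κ] (M : ∀ i, Matrix (m' i) κ R) (x : o × κ → R) (i : o) :
    (fun l => (blockDiagonalProd M *ᵥ x) ⟨i, l⟩) = M i *ᵥ fun k => x (i, k) := by
  rw [blockDiagonalProd, submatrix_mulVec_equiv]
  exact blockDiagonal'_mulVec_apply M _ i

theorem blockDiagonalProd_transpose_mulVec_apply [NonUnitalNonAssocSemiring R] [Fintype o]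
    [DecidableEq o] [∀ i, Fintype (m' i)] (M : ∀ i, Matrix (m' i) κ R) (w : (Σ i, m' i) → R)
    (i : o) :
    (fun k => ((blockDiagonalProd M)ᵀ *ᵥ w) (i, k)) = (M i)ᵀ *ᵥ fun l => w ⟨i, l⟩ := by
  rw [blockDiagonalProd, transpose_submatrix, blockDiagonal'_transpose]
  exact blockDiagonal'_mulVec_apply (fun i => (M i)ᵀ) w i

theorem blockDiagonalProd_transpose_mulVec_blockDiagonal'_mulVec_sub [CommRing R] [Fintype o]
    [DecidableEq o] [Fintype κ] [∀ i, Fintype (m' i)] (M : ∀ i, Matrix (m' i) κ R)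
    (W : ∀ i, Matrix (m' i) (m' i) R) (z : ∀ i, m' i → R) (x : o × κ → R) (i : o) :
    (fun k => ((blockDiagonalProd M)ᵀ *ᵥ
        (blockDiagonal' W *ᵥ ((fun p => z p.1 p.2) - blockDiagonalProd M *ᵥ x))) (i, k)) =
      (M i)ᵀ *ᵥ (W i *ᵥ (z i - M i *ᵥ fun k => x (i, k))) := by
  rw [blockDiagonalProd_transpose_mulVec_apply, blockDiagonal'_mulVec_apply W _ i,
    ← blockDiagonalProd_mulVec_apply M x i]
  rfl

theorem sum_transpose_mulVec_mulVec_sub [CommRing R] [Fintype o] [Fintype κ]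
    [∀ i, Fintype (m' i)]
    (H : ∀ i, Matrix (m' i) κ R) (W : ∀ i, Matrix (m' i) (m' i) R) (z : ∀ i, m' i → R)
    (ξ : κ → R) :
    ∑ i, (H i)ᵀ *ᵥ (W i *ᵥ (z i - H i *ᵥ ξ)) =
      ∑ i, (H i)ᵀ *ᵥ (W i *ᵥ z i) - (∑ i, (H i)ᵀ * W i * H i) *ᵥ ξ := by
  simp only [mulVec_sub, sum_mulVec, mulVec_mulVec, Matrix.mul_assoc, Finset.sum_sub_distrib]

end Matrix

theorem kkt_primal_solution_consensus_general
    (N n : ℕ) (m : Fin N → ℕ)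
    (L : Matrix (Fin N) (Fin N) ℝ)
    (hsymm : L.IsSymm)
    (hker : ∀ v : Fin N → ℝ, L *ᵥ v = 0 ↔ ∃ c : ℝ, v = fun _ => c)
    (z : ∀ i : Fin N, Fin (m i) → ℝ)
    (H : ∀ i : Fin N, Matrix (Fin (m i)) (Fin n) ℝ)
    (S : ∀ i : Fin N, Matrix (Fin (m i)) (Fin (m i)) ℝ)
    (hS : ∀ i, (S i).PosDef)
    (Hcons : Matrix (Fin n) (Fin n) ℝ)
    (hHcons : Hcons = ∑ i : Fin N, (H i)ᵀ * (S i)⁻¹ * (H i))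
    (hHconsUnit : IsUnit Hcons)
    (ξstar lamstar : Fin N × Fin n → ℝ)
    -- the big block-diagonal output matrix 𝐇 and block-diagonal weight S
    (Hbig : Matrix (Σ i : Fin N, Fin (m i)) (Fin N × Fin n) ℝ)
    (hHbig : Hbig = fun p q => if p.1 = q.1 then H p.1 p.2 q.2 else 0)
    (Sbig : Matrix (Σ i : Fin N, Fin (m i)) (Σ i : Fin N, Fin (m i)) ℝ)
    (hSbig : Sbig = Matrix.blockDiagonal' S)
    (zbig : (Σ i : Fin N, Fin (m i)) → ℝ)
    (hzbig : zbig = fun p => z p.1 p.2)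
    -- the KKT (saddle point) equations
    (hstat : -(Hbigᵀ *ᵥ (Sbig⁻¹ *ᵥ (zbig - Hbig *ᵥ ξstar)))
        + (L ⊗ₖ (1 : Matrix (Fin n) (Fin n) ℝ)) *ᵥ lamstar = 0)
    (hfeas : (L ⊗ₖ (1 : Matrix (Fin n) (Fin n) ℝ)) *ᵥ ξstar = 0) :
    ∀ i : Fin N, (fun k => ξstar (i, k)) =
      Hcons⁻¹ *ᵥ (∑ j : Fin N, (H j)ᵀ *ᵥ ((S j)⁻¹ *ᵥ z j)) := by
  intro i
  obtain ⟨ξ, hξ⟩ :=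
    exists_forall_curry_eq_of_kronecker_one_mulVec_eq_zero (fun v => (hker v).1) hfeas
  have hcol : 1 ᵥ* L = 0 := by
    rw [← mulVec_transpose, hsymm.eq]
    exact (hker 1).2 ⟨1, rfl⟩
  rw [← blockDiagonalProd_eq] at hHbig
  subst hHbig hSbig hzbig
  rw [inv_blockDiagonal' S fun j => (isUnit_iff_isUnit_det _).1 (hS j).isUnit] at hstat
  have hblock : ∀ j, (H j)ᵀ *ᵥ ((S j)⁻¹ *ᵥ (z j - H j *ᵥ ξ)) =
      fun k => ((L ⊗ₖ (1 : Matrix (Fin n) (Fin n) ℝ)) *ᵥ lamstar) (j, k) := fun j => by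
    rw [← hξ j, ← neg_add_eq_zero.1 hstat]
    exact (blockDiagonalProd_transpose_mulVec_blockDiagonal'_mulVec_sub H (fun j => (S j)⁻¹) z
      ξstar j).symm
  have hnormal : Hcons *ᵥ ξ = ∑ j, (H j)ᵀ *ᵥ ((S j)⁻¹ *ᵥ z j) := by
    have := sum_transpose_mulVec_mulVec_sub H (fun j => (S j)⁻¹) z ξ
    rw [Finset.sum_congr rfl fun j _ => hblock j, sum_kronecker_one_mulVec_eq_zero hcol,
      ← hHcons] at this
    exact (sub_eq_zero.1 this.symm).symm
  let _ := hHconsUnit.invertible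
  exact hξ i ▸ (inv_mulVec_eq_vec hnormal.symm).symm

/-- the primal part of any KKT point of the consensus optimization problem
is the consensus vector `1_N ⊗ ξ†` with `ξ† = H_cons⁻¹ Σ_i H_iᵀ S_i⁻¹ z_i`. -/
theorem kkt_primal_solution_consensus
    (N n : ℕ) (m : Fin N → ℕ)
    (L : Matrix (Fin N) (Fin N) ℝ)
    (hsymm : L.IsSymm) (hpsd : L.PosSemidef)
    (hker : ∀ v : Fin N → ℝ, L *ᵥ v = 0 ↔ ∃ c : ℝ, v = fun _ => c)
    (z : ∀ i : Fin N, Fin (m i) → ℝ)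
    (H : ∀ i : Fin N, Matrix (Fin (m i)) (Fin n) ℝ)
    (S : ∀ i : Fin N, Matrix (Fin (m i)) (Fin (m i)) ℝ)
    (hS : ∀ i, (S i).PosDef)
    (Hcons : Matrix (Fin n) (Fin n) ℝ)
    (hHcons : Hcons = ∑ i : Fin N, (H i)ᵀ * (S i)⁻¹ * (H i))
    (hHconsUnit : IsUnit Hcons)
    (ξstar lamstar : Fin N × Fin n → ℝ)
    -- the big block-diagonal output matrix 𝐇 and block-diagonal weight S
    (Hbig : Matrix (Σ i : Fin N, Fin (m i)) (Fin N × Fin n) ℝ)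
    (hHbig : Hbig = fun p q => if p.1 = q.1 then H p.1 p.2 q.2 else 0)
    (Sbig : Matrix (Σ i : Fin N, Fin (m i)) (Σ i : Fin N, Fin (m i)) ℝ)
    (hSbig : Sbig = Matrix.blockDiagonal' S)
    (zbig : (Σ i : Fin N, Fin (m i)) → ℝ)
    (hzbig : zbig = fun p => z p.1 p.2)
    -- the KKT (saddle point) equations
    (hstat : -(Hbigᵀ *ᵥ (Sbig⁻¹ *ᵥ (zbig - Hbig *ᵥ ξstar)))
        + (L ⊗ₖ (1 : Matrix (Fin n) (Fin n) ℝ)) *ᵥ lamstar = 0)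
    (hfeas : (L ⊗ₖ (1 : Matrix (Fin n) (Fin n) ℝ)) *ᵥ ξstar = 0) :
    ∀ i : Fin N, (fun k => ξstar (i, k)) =
      Hcons⁻¹ *ᵥ (∑ j : Fin N, (H j)ᵀ *ᵥ ((S j)⁻¹ *ᵥ z j)) :=
  kkt_primal_solution_consensus_general N n m L hsymm hker z H S hS Hcons hHcons hHconsUnit ξstar
    lamstar Hbig hHbig Sbig hSbig zbig hzbig hstat hfeas
end

section
/- Schur stability of the consensus-error iteration matrix: let L be a connected graph Laplacian with nonzero eigenvalues σ_2 ≤ ... ≤ σ_N ≤ σ̄, let A = diag{α_1,...,α_N} with 0 < α_i < 2/σ̄². Then all eigenvalues of the symmetric matrix Λ̃ Wᵀ A W Λ̃ lie in (0, 2), hence every eigenvalue of I_{N−1} − Λ̃ Wᵀ A W Λ̃ has absolute value strictly less than 1. -/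
/-!
If `M v = μ v` with `M = Bᵀ A B`, `B = W Λ̃` and `A = diag α`, then the Rayleigh quotient gives
`μ ‖v‖² = ∑ αᵢ (B v)ᵢ²`. This is positive because `Wᵀ W = 1` makes `W` an isometry, so `B v ≠ 0`;
and it is below `(2 / σ̄²) ‖B v‖² = (2 / σ̄²) ‖Λ̃ v‖² ≤ 2 ‖v‖²`.
-/

open Matrix

section

variable {m n : Type*} [Fintype m] [Fintype n]

lemma dotProduct_self_pos {v : n → ℝ} (hv : v ≠ 0) : 0 < v ⬝ᵥ v :=
  lt_of_le_of_ne (Finset.sum_nonneg fun i _ => mul_self_nonneg (v i))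
    (Ne.symm (dotProduct_self_eq_zero.not.mpr hv))

lemma dotProduct_mulVec_eq_of_mulVec_eq_smul {M : Matrix n n ℝ} {v : n → ℝ} {μ : ℝ}
    (hv : M *ᵥ v = μ • v) : v ⬝ᵥ (M *ᵥ v) = μ * (v ⬝ᵥ v) := by
  rw [hv, dotProduct_smul, smul_eq_mul]

lemma dotProduct_transpose_mul_diagonal_mul_mulVec [DecidableEq m] (B : Matrix m n ℝ)
    (α : m → ℝ) (v : n → ℝ) :
    v ⬝ᵥ ((Bᵀ * diagonal α * B) *ᵥ v) = ∑ i, α i * (B *ᵥ v) i ^ 2 := by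
  rw [Matrix.mul_assoc, ← mulVec_mulVec, dotProduct_mulVec, vecMul_transpose,
    ← mulVec_mulVec, dotProduct, Finset.sum_congr rfl]
  intro i _
  rw [mulVec_diagonal]
  ring

lemma sum_mul_sq_pos_and_lt {α u : m → ℝ} {c : ℝ} (hα : ∀ i, 0 < α i ∧ α i < c)
    (hu : u ≠ 0) : 0 < ∑ i, α i * u i ^ 2 ∧ ∑ i, α i * u i ^ 2 < c * (u ⬝ᵥ u) := by
  obtain ⟨i₀, hi₀⟩ : ∃ i, u i ≠ 0 := Function.ne_iff.mp hu
  have hu₀ : 0 < u i₀ ^ 2 := by positivity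
  refine ⟨Finset.sum_pos' (fun i _ => by have := (hα i).1; positivity)
    ⟨i₀, Finset.mem_univ _, mul_pos (hα i₀).1 hu₀⟩, ?_⟩
  rw [dotProduct, Finset.mul_sum]
  refine Finset.sum_lt_sum (fun i _ => ?_) ⟨i₀, Finset.mem_univ _, ?_⟩
  · nlinarith [hα i, sq_nonneg (u i)]
  · nlinarith [hα i₀]

lemma eigenvalue_transpose_mul_diagonal_mul_mem_Ioo [DecidableEq m] {B : Matrix m n ℝ}
    {α : m → ℝ} {c K μ : ℝ} {v : n → ℝ} (hα : ∀ i, 0 < α i ∧ α i < c)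
    (hB : ∀ x, (B *ᵥ x) ⬝ᵥ (B *ᵥ x) ≤ K * (x ⬝ᵥ x)) (hBv : B *ᵥ v ≠ 0)
    (hv : (Bᵀ * diagonal α * B) *ᵥ v = μ • v) : 0 < μ ∧ μ < c * K := by
  have hv₀ : 0 < v ⬝ᵥ v := dotProduct_self_pos fun h => hBv (by rw [h, mulVec_zero])
  have hquad := dotProduct_mulVec_eq_of_mulVec_eq_smul hv
  rw [dotProduct_transpose_mul_diagonal_mul_mulVec] at hquad
  obtain ⟨hpos, hlt⟩ := sum_mul_sq_pos_and_lt hα hBv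
  have hc : 0 < c := by
    obtain ⟨i, -⟩ := Function.ne_iff.mp hBv
    exact (hα i).1.trans (hα i).2
  have hgram : c * ((B *ᵥ v) ⬝ᵥ (B *ᵥ v)) ≤ c * K * (v ⬝ᵥ v) := by
    rw [mul_assoc]; exact mul_le_mul_of_nonneg_left (hB v) hc.le
  constructor <;> nlinarith

lemma mulVec_dotProduct_mulVec_self_of_transpose_mul_self_eq_one [DecidableEq n] {W : Matrix m n ℝ}
    (hW : Wᵀ * W = 1) (x : n → ℝ) : (W *ᵥ x) ⬝ᵥ (W *ᵥ x) = x ⬝ᵥ x := by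
  rw [dotProduct_mulVec, ← vecMul_transpose, vecMul_vecMul, hW, vecMul_one]

lemma mulVec_ne_zero_of_transpose_mul_self_eq_one [DecidableEq n] {W : Matrix m n ℝ} (hW : Wᵀ * W = 1)
    {x : n → ℝ} (hx : x ≠ 0) : W *ᵥ x ≠ 0 := by
  rw [Ne, ← dotProduct_self_eq_zero,
    mulVec_dotProduct_mulVec_self_of_transpose_mul_self_eq_one hW, dotProduct_self_eq_zero]
  exact hx

lemma diagonal_mulVec_ne_zero [DecidableEq n] {σ x : n → ℝ} (hσ : ∀ j, σ j ≠ 0) (hx : x ≠ 0) :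
    diagonal σ *ᵥ x ≠ 0 := by
  obtain ⟨j, hj⟩ := Function.ne_iff.mp hx
  exact Function.ne_iff.mpr ⟨j, by simpa [mulVec_diagonal] using ⟨hσ j, hj⟩⟩

lemma diagonal_mulVec_dotProduct_self_le [DecidableEq n] {σ : n → ℝ} {s : ℝ}
    (hσ : ∀ j, σ j ^ 2 ≤ s) (x : n → ℝ) :
    (diagonal σ *ᵥ x) ⬝ᵥ (diagonal σ *ᵥ x) ≤ s * (x ⬝ᵥ x) := by
  simp only [dotProduct, mulVec_diagonal, Finset.mul_sum]
  exact Finset.sum_le_sum fun j _ => by nlinarith [hσ j, mul_self_nonneg (x j)]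

end

theorem consensus_error_iteration_schur_stable_general
    (N : ℕ)
    (W : Matrix (Fin N) (Fin (N - 1)) ℝ)
    (hW : Wᵀ * W = 1)
    (σ : Fin (N - 1) → ℝ) (σbar : ℝ)
    (hσpos : ∀ j, 0 < σ j) (hσbar : ∀ j, σ j ≤ σbar)
    (α : Fin N → ℝ)
    (hα : ∀ i, 0 < α i ∧ α i < 2 / σbar ^ 2) :
    ∀ (μ : ℝ) (v : Fin (N - 1) → ℝ), v ≠ 0 →
      (Matrix.diagonal σ * Wᵀ * Matrix.diagonal α * W * Matrix.diagonal σ) *ᵥ v = μ • v →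
        (0 < μ ∧ μ < 2) ∧ |1 - μ| < 1 := by
  intro μ v hv hev
  obtain ⟨j₀, -⟩ := Function.ne_iff.mp hv
  have hσbar_pos : 0 < σbar := (hσpos j₀).trans_le (hσbar j₀)
  have hM : diagonal σ * Wᵀ * diagonal α * W * diagonal σ
      = (W * diagonal σ)ᵀ * diagonal α * (W * diagonal σ) := by
    simp only [transpose_mul, diagonal_transpose, Matrix.mul_assoc]
  have hB : ∀ x, ((W * diagonal σ) *ᵥ x) ⬝ᵥ ((W * diagonal σ) *ᵥ x) ≤ σbar ^ 2 * (x ⬝ᵥ x) := by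
    intro x
    rw [← mulVec_mulVec, mulVec_dotProduct_mulVec_self_of_transpose_mul_self_eq_one hW]
    exact diagonal_mulVec_dotProduct_self_le
      (fun j => pow_le_pow_left₀ (hσpos j).le (hσbar j) 2) x
  have hBv : (W * diagonal σ) *ᵥ v ≠ 0 := by
    rw [← mulVec_mulVec]
    exact mulVec_ne_zero_of_transpose_mul_self_eq_one hW
      (diagonal_mulVec_ne_zero (fun j => (hσpos j).ne') hv)
  rw [hM] at hev
  obtain ⟨hμ_pos, hμ_lt⟩ := eigenvalue_transpose_mul_diagonal_mul_mem_Ioo hα hB hBv hev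
  rw [div_mul_cancel₀ 2 (by positivity)] at hμ_lt
  exact ⟨⟨hμ_pos, hμ_lt⟩, abs_lt.mpr ⟨by linarith, by linarith⟩⟩

/-- eigenvalues of `Λ̃ Wᵀ A W Λ̃` lie in `(0,2)`, hence every eigenvalue of
`I − Λ̃ Wᵀ A W Λ̃` has absolute value strictly less than 1. -/
theorem consensus_error_iteration_schur_stable
    (N : ℕ) (L : Matrix (Fin N) (Fin N) ℝ)
    (hsymm : L.IsSymm) (hpsd : L.PosSemidef)
    (W : Matrix (Fin N) (Fin (N - 1)) ℝ)
    (hW : Wᵀ * W = 1)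
    (σ : Fin (N - 1) → ℝ) (σbar : ℝ)
    (hσpos : ∀ j, 0 < σ j) (hσbar : ∀ j, σ j ≤ σbar)
    (hLW : L * W = W * Matrix.diagonal σ)
    (α : Fin N → ℝ)
    (hα : ∀ i, 0 < α i ∧ α i < 2 / σbar ^ 2) :
    ∀ (μ : ℝ) (v : Fin (N - 1) → ℝ), v ≠ 0 →
      (Matrix.diagonal σ * Wᵀ * Matrix.diagonal α * W * Matrix.diagonal σ) *ᵥ v = μ • v →
        (0 < μ ∧ μ < 2) ∧ |1 - μ| < 1 :=
  consensus_error_iteration_schur_stable_general N W hW σ σbar hσpos hσbar α hα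
end

section
/- Convergence of the dual-ascent consensus iteration on information rates: consider e_{l+1} = (I_{Nn} − (L⊗I_n) Ā (L⊗I_n)) e_l, where Ā = A ⊗ I_n, A = diag{α_1,...,α_N}, 0 < α_i < 2/σ̄², and the initial error satisfies (1_Nᵀ ⊗ I_n) e_0 = 0 (zero average). Then e_l → 0 as l → ∞. -/
/-!
Each of the `n` coordinate columns of `e l` evolves by `B = 1 - L A L`. Since `L 𝟙 = 0` and `L` is
symmetric, `B` preserves the zero-sum subspace `S = 𝟙ᗮ`. Expanding the square,
`‖B v‖² = ‖v‖² - 2 ⟪L v, A L v⟫ + ‖L A L v‖² ≤ ‖v‖² - ∑ i, α i (2 - σ̄² α i) (L v)ᵢ²`,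
because the eigenvalues of `L` lie in `[0, σ̄]`; this is `< ‖v‖²` whenever `L v ≠ 0`, that is, for
every nonzero `v ∈ S`. Compactness of the unit sphere of `S` upgrades this to a uniform contraction
factor `r < 1` on `S`, so every column decays like `rˡ`.
-/

open Matrix Filter
open scoped Kronecker Topology RealInnerProductSpace

section Contraction

variable {E : Type*} [NormedAddCommGroup E] [NormedSpace ℝ E] [FiniteDimensional ℝ E]

theorem LinearMap.exists_norm_apply_le_mul_of_norm_apply_lt (T : E →ₗ[ℝ] E) (S : Submodule ℝ E)
    (hT : ∀ v ∈ S, v ≠ 0 → ‖T v‖ < ‖v‖) :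
    ∃ r, 0 ≤ r ∧ r < 1 ∧ ∀ v ∈ S, ‖T v‖ ≤ r * ‖v‖ := by
  set K := Metric.sphere (0 : E) 1 ∩ S
  have hnormalize : ∀ v ∈ S, v ≠ 0 → ‖v‖⁻¹ • v ∈ K := fun v hv hv0 =>
    ⟨by simp [norm_smul, hv0], S.smul_mem _ hv⟩
  have hhom : ∀ v : E, ‖T v‖ = ‖v‖ * ‖T (‖v‖⁻¹ • v)‖ := fun v => by
    rcases eq_or_ne v 0 with rfl | hv0
    · simp
    · rw [map_smul, norm_smul, norm_inv, norm_norm, mul_inv_cancel_left₀ (norm_ne_zero_iff.2 hv0)]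
  rcases K.eq_empty_or_nonempty with hK | hK
  · refine ⟨0, le_rfl, one_pos, fun v hv => ?_⟩
    rcases eq_or_ne v 0 with rfl | hv0
    · simp
    · exact absurd (hnormalize v hv hv0) (hK ▸ Set.notMem_empty _)
  have hKc : IsCompact K := (isCompact_sphere 0 1).inter_right S.closed_of_finiteDimensional
  obtain ⟨v₀, ⟨hv₀1, hv₀S⟩, hmax⟩ :=
    hKc.exists_isMaxOn hK T.continuous_of_finiteDimensional.norm.continuousOn
  have hv₀1 : ‖v₀‖ = 1 := mem_sphere_zero_iff_norm.1 hv₀1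
  refine ⟨‖T v₀‖, norm_nonneg _, ?_, fun v hv => ?_⟩
  · simpa [hv₀1] using hT v₀ hv₀S (norm_ne_zero_iff.1 (hv₀1.symm ▸ one_ne_zero))
  · rcases eq_or_ne v 0 with rfl | hv0
    · simp
    · rw [hhom, mul_comm]
      exact mul_le_mul_of_nonneg_right (hmax (hnormalize v hv hv0)) (norm_nonneg _)

theorem LinearMap.tendsto_zero_of_norm_apply_lt (T : E →ₗ[ℝ] E) (S : Submodule ℝ E)
    (hS : Set.MapsTo T S S) (hT : ∀ v ∈ S, v ≠ 0 → ‖T v‖ < ‖v‖)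
    (x : ℕ → E) (hx : ∀ l, x (l + 1) = T (x l)) (hx₀ : x 0 ∈ S) :
    Tendsto x atTop (𝓝 0) := by
  obtain ⟨r, hr₀, hr₁, hr⟩ := T.exists_norm_apply_le_mul_of_norm_apply_lt S hT
  have hmem : ∀ l, x l ∈ S := fun l => by
    induction l with
    | zero => exact hx₀
    | succ l ih => exact hx l ▸ hS ih
  have hdecay : ∀ l, ‖x l‖ ≤ r ^ l * ‖x 0‖ := fun l => by
    induction l with
    | zero => simp
    | succ l ih =>
      calc ‖x (l + 1)‖ ≤ r * ‖x l‖ := hx l ▸ hr _ (hmem l)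
        _ ≤ r * (r ^ l * ‖x 0‖) := by gcongr
        _ = r ^ (l + 1) * ‖x 0‖ := by ring
  refine squeeze_zero_norm hdecay ?_
  simpa using (tendsto_pow_atTop_nhds_zero_of_lt_one hr₀ hr₁).mul_const ‖x 0‖

end Contraction

section Symmetric

variable {𝕜 E : Type*} [RCLike 𝕜] [NormedAddCommGroup E] [InnerProductSpace 𝕜 E]

theorem LinearMap.IsSymmetric.norm_apply_sq_le [FiniteDimensional 𝕜 E] {T : E →ₗ[𝕜] E}
    (hT : T.IsSymmetric) {σ : ℝ} (hσ : ∀ (μ : 𝕜) (v : E), v ≠ 0 → T v = μ • v → ‖μ‖ ≤ σ)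
    (x : E) : ‖T x‖ ^ 2 ≤ σ ^ 2 * ‖x‖ ^ 2 := by
  set b := hT.eigenvectorBasis rfl
  set μ := hT.eigenvalues rfl
  have hinner : ∀ i, ‖inner 𝕜 (b i) (T x)‖ = ‖(μ i : 𝕜)‖ * ‖inner 𝕜 (b i) x‖ := fun i => by
    rw [← hT, hT.apply_eigenvectorBasis, inner_smul_left, norm_mul, RCLike.norm_conj]
  have hμ : ∀ i, ‖(μ i : 𝕜)‖ ^ 2 ≤ σ ^ 2 := fun i =>
    pow_le_pow_left₀ (norm_nonneg _)
      (hσ _ _ (b.orthonormal.ne_zero i) (hT.apply_eigenvectorBasis rfl i)) 2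
  rw [← b.sum_sq_norm_inner_right, ← b.sum_sq_norm_inner_right, Finset.mul_sum]
  gcongr with i
  rw [hinner, mul_pow]
  exact mul_le_mul_of_nonneg_right (hμ i) (sq_nonneg _)

theorem LinearMap.IsSymmetric.apply_mem_orthogonal_singleton {T : E →ₗ[𝕜] E} (hT : T.IsSymmetric)
    {u : E} (hu : T u = 0) (v : E) : T v ∈ (𝕜 ∙ u)ᗮ := by
  rw [Submodule.mem_orthogonal_singleton_iff_inner_right, ← hT, hu, inner_zero_left]

end Symmetric

theorem LinearMap.IsSymmetric.norm_sub_apply_comp_lt {F : Type*} [NormedAddCommGroup F]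
    [InnerProductSpace ℝ F] {T D : F →ₗ[ℝ] F} (hT : T.IsSymmetric)
    {σ : ℝ} (hTσ : ∀ u, ‖T u‖ ^ 2 ≤ σ ^ 2 * ‖u‖ ^ 2)
    (hD : ∀ w, w ≠ 0 → σ ^ 2 * ‖D w‖ ^ 2 < 2 * ⟪w, D w⟫) {v : F} (hv : T v ≠ 0) :
    ‖v - T (D (T v))‖ < ‖v‖ := by
  refine lt_of_pow_lt_pow_left₀ 2 (norm_nonneg v) ?_
  calc ‖v - T (D (T v))‖ ^ 2 = ‖v‖ ^ 2 - 2 * ⟪T v, D (T v)⟫ + ‖T (D (T v))‖ ^ 2 := by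
        rw [norm_sub_sq_real, hT]
    _ ≤ ‖v‖ ^ 2 - 2 * ⟪T v, D (T v)⟫ + σ ^ 2 * ‖D (T v)‖ ^ 2 := by gcongr; exact hTσ _
    _ < ‖v‖ ^ 2 := by linarith [hD _ hv]

section Matrix

variable {ι : Type*} [Fintype ι] [DecidableEq ι]

theorem Matrix.PosSemidef.norm_le_of_toEuclideanLin_eq_smul {A : Matrix ι ι ℝ} (hA : A.PosSemidef)
    {σ : ℝ} (hσ : ∀ (μ : ℝ) (v : ι → ℝ), v ≠ 0 → A *ᵥ v = μ • v → μ ≤ σ)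
    (μ : ℝ) (v : EuclideanSpace ℝ ι) (hv : v ≠ 0) (hAv : A.toEuclideanLin v = μ • v) :
    ‖μ‖ ≤ σ := by
  have hμ : 0 ≤ μ :=
    eigenvalue_nonneg_of_nonneg
      (Module.End.hasEigenvalue_of_hasEigenvector ⟨by simpa using hAv, hv⟩)
      (isPositive_toEuclideanLin_iff.2 hA).re_inner_nonneg_right
  rw [Real.norm_of_nonneg hμ]
  exact hσ μ v.ofLp (by simpa using hv) congr(WithLp.ofLp $hAv)

theorem Matrix.sq_mul_norm_sq_diagonal_lt_two_mul_inner {α : ι → ℝ} {σ : ℝ}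
    (hα₀ : ∀ i, 0 < α i) (hα : ∀ i, σ ^ 2 * α i < 2) {w : EuclideanSpace ℝ ι} (hw : w ≠ 0) :
    σ ^ 2 * ‖(diagonal α).toEuclideanLin w‖ ^ 2 < 2 * ⟪w, (diagonal α).toEuclideanLin w⟫ := by
  obtain ⟨j, hj⟩ : ∃ j, w j ≠ 0 := by
    by_contra! h
    exact hw (by ext i; exact h i)
  simp only [EuclideanSpace.real_norm_sq_eq, PiLp.inner_apply, toLpLin_apply, mulVec_diagonal,
    Finset.mul_sum, RCLike.inner_apply, conj_trivial]
  refine Finset.sum_lt_sum (fun i _ => ?_) ⟨j, Finset.mem_univ j, ?_⟩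
  · nlinarith [hα₀ i, hα i, sq_nonneg (w i)]
  · nlinarith [mul_pos (mul_pos (hα₀ j) (sq_pos_of_ne_zero hj)) (sub_pos.2 (hα j))]

theorem Matrix.eq_zero_of_toEuclideanLin_eq_zero {A : Matrix ι ι ℝ}
    (hker : ∀ v : ι → ℝ, A *ᵥ v = 0 → ∃ c : ℝ, v = fun _ => c) {v : EuclideanSpace ℝ ι}
    (hv : v ∈ (ℝ ∙ WithLp.toLp 2 (fun _ : ι => (1 : ℝ)))ᗮ) (hAv : A.toEuclideanLin v = 0) :
    v = 0 := by
  obtain ⟨c, hc⟩ := hker v.ofLp congr(WithLp.ofLp $hAv)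
  have hv' : v ∈ ℝ ∙ WithLp.toLp 2 (fun _ : ι => (1 : ℝ)) :=
    Submodule.mem_span_singleton.2 ⟨c, by ext; simp [hc]⟩
  exact inner_self_eq_zero.1 (Submodule.inner_right_of_mem_orthogonal hv' hv)

end Matrix

theorem Matrix.kronecker_one_mulVec_apply_s7 {R ι κ : Type*} [CommSemiring R] [Fintype ι]
    [Fintype κ] [DecidableEq κ] (M : Matrix ι ι R) (x : ι × κ → R) (i : ι) (k : κ) :
    ((M ⊗ₖ (1 : Matrix κ κ R)) *ᵥ x) (i, k) = (M *ᵥ fun j => x (j, k)) i := by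
  have := congrFun (kronecker_mulVec_vec (1 : Matrix κ κ R) (of fun k i => x (i, k)) M) (i, k)
  simpa [vec, mul_apply, mulVec, dotProduct, mul_comm] using this

theorem dual_ascent_information_rate_convergence_general
    (N n : ℕ) (L : Matrix (Fin N) (Fin N) ℝ)
    (hpsd : L.PosSemidef)
    (hrow : L *ᵥ (fun _ => (1 : ℝ)) = 0)
    (hker : ∀ v : Fin N → ℝ, L *ᵥ v = 0 ↔ ∃ c : ℝ, v = fun _ => c)
    (σbar : ℝ) (hσbar : 0 < σbar)
    (hmaxeig : ∀ (μ : ℝ) (v : Fin N → ℝ), v ≠ 0 → L *ᵥ v = μ • v → μ ≤ σbar)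
    (α : Fin N → ℝ) (hα : ∀ i, 0 < α i ∧ α i < 2 / σbar ^ 2)
    (e : ℕ → (Fin N × Fin n → ℝ))
    (hiter : ∀ l : ℕ, e (l + 1) =
      (1 - (L ⊗ₖ (1 : Matrix (Fin n) (Fin n) ℝ))
          * ((Matrix.diagonal α) ⊗ₖ (1 : Matrix (Fin n) (Fin n) ℝ))
          * (L ⊗ₖ (1 : Matrix (Fin n) (Fin n) ℝ))) *ᵥ e l)
    (havg : ∀ k : Fin n, ∑ i : Fin N, e 0 (i, k) = 0) :
    Tendsto e atTop (𝓝 0) := by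
  set T := L.toEuclideanLin
  set B := LinearMap.id - T ∘ₗ (diagonal α).toEuclideanLin ∘ₗ T
  set ones := WithLp.toLp 2 (fun _ : Fin N => (1 : ℝ))
  set S := (ℝ ∙ ones)ᗮ
  have hT : T.IsSymmetric := isSymmetric_toEuclideanLin_iff.2 hpsd.isHermitian
  have hcol : ∀ l k, WithLp.toLp 2 (fun i => e (l + 1) (i, k)) =
      B (WithLp.toLp 2 fun i => e l (i, k)) := fun l k => by
    ext i
    simp [B, T, hiter, ← mul_kronecker_mul, sub_mulVec, kronecker_one_mulVec_apply_s7,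
      mulVec_mulVec, Matrix.mul_assoc]
  have hmaps : Set.MapsTo B S S := fun v hv =>
    S.sub_mem hv (hT.apply_mem_orthogonal_singleton (congrArg (WithLp.toLp 2) hrow) _)
  have hσα : ∀ i, σbar ^ 2 * α i < 2 := fun i => by
    have := (hα i).2
    rwa [lt_div_iff₀ (by positivity), mul_comm] at this
  have hlt : ∀ v ∈ S, v ≠ 0 → ‖B v‖ < ‖v‖ := fun v hvS hv0 =>
    hT.norm_sub_apply_comp_lt
      (hT.norm_apply_sq_le (hpsd.norm_le_of_toEuclideanLin_eq_smul hmaxeig))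
      (fun _ => sq_mul_norm_sq_diagonal_lt_two_mul_inner (fun i => (hα i).1) hσα)
      (fun hTv => hv0 (eq_zero_of_toEuclideanLin_eq_zero (fun v => (hker v).1) hvS hTv))
  rw [tendsto_pi_nhds]
  rintro ⟨i, k⟩
  have hcol₀ : WithLp.toLp 2 (fun i => e 0 (i, k)) ∈ S := by
    simpa [S, ones, Submodule.mem_orthogonal_singleton_iff_inner_right, PiLp.inner_apply]
      using havg k
  simpa [Function.comp_def] using ((PiLp.continuous_apply 2 _ i).tendsto 0).comp
    (B.tendsto_zero_of_norm_apply_lt S hmaps hlt (fun l => WithLp.toLp 2 fun i => e l (i, k))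
      (hcol · k) hcol₀)

/-- the dual-ascent consensus iteration on the zero-average subspace
converges to zero. -/
theorem dual_ascent_information_rate_convergence
    (N n : ℕ) (L : Matrix (Fin N) (Fin N) ℝ)
    (hsymm : L.IsSymm) (hpsd : L.PosSemidef)
    (hrow : L *ᵥ (fun _ => (1 : ℝ)) = 0)
    (hker : ∀ v : Fin N → ℝ, L *ᵥ v = 0 ↔ ∃ c : ℝ, v = fun _ => c)
    (σbar : ℝ) (hσbar : 0 < σbar)
    (hmaxeig : ∀ (μ : ℝ) (v : Fin N → ℝ), v ≠ 0 → L *ᵥ v = μ • v → μ ≤ σbar)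
    (α : Fin N → ℝ) (hα : ∀ i, 0 < α i ∧ α i < 2 / σbar ^ 2)
    (e : ℕ → (Fin N × Fin n → ℝ))
    (hiter : ∀ l : ℕ, e (l + 1) =
      (1 - (L ⊗ₖ (1 : Matrix (Fin n) (Fin n) ℝ))
          * ((Matrix.diagonal α) ⊗ₖ (1 : Matrix (Fin n) (Fin n) ℝ))
          * (L ⊗ₖ (1 : Matrix (Fin n) (Fin n) ℝ))) *ᵥ e l)
    (havg : ∀ k : Fin n, ∑ i : Fin N, e 0 (i, k) = 0) :
    Tendsto e atTop (𝓝 0) :=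
  dual_ascent_information_rate_convergence_general N n L hpsd hrow hker σbar hσbar hmaxeig α hα e
    hiter havg
end

section
/- Monotone upper bound propagation for the Riccati-type recursion: suppose P̄ is symmetric positive definite satisfying P̄ = F(P̄⁻¹ + (1−κ)Θ†)⁻¹Fᵀ + q̄ I with q̄ I ≥ Q. If P (symmetric positive definite) satisfies P ≤ P̄ and Θ is symmetric with Θ ≥ (1−κ)Θ†, then F(P⁻¹ + Θ)⁻¹Fᵀ + Q ≤ P̄. -/
/-!
Both sides are images of the Riccati map `X ↦ F (X⁻¹ + Θ)⁻¹ Fᵀ + Q`. Passing from `(P, Θ, Q)` to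
`(P̄, (1−κ)Θ†, q̄ I)` moves every argument in the Loewner direction that increases the value:
inversion is antitone on positive definite matrices (applied twice), congruence by `F` is
monotone, and `Q ≤ q̄ I`. The fixed-point equation identifies the larger value with `P̄`.
-/

open Matrix

namespace Matrix

variable {n K : Type*} [Fintype n] [DecidableEq n]
  [Field K] [PartialOrder K] [StarRing K] [StarOrderedRing K]

/-- Both Schur complements of `[B 1; 1 A⁻¹]`, `B - A` and `A⁻¹ - B⁻¹`, are positive semidefinite
exactly when the block matrix is. -/
theorem PosDef.posSemidef_inv_sub_inv {A B : Matrix n n K} (hA : A.PosDef)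
    (hAB : (B - A).PosSemidef) : (A⁻¹ - B⁻¹).PosSemidef := by
  have hB : B.PosDef := by simpa using hA.add_posSemidef hAB
  let _ := hB.isUnit.invertible
  let _ := hA.inv.isUnit.invertible
  have hblock : (fromBlocks B 1 1ᴴ A⁻¹).PosSemidef := by
    refine (PosDef.fromBlocks₂₂ B 1 hA.inv).mpr ?_
    rwa [conjTranspose_one, mul_one, one_mul,
      nonsing_inv_nonsing_inv A ((isUnit_iff_isUnit_det A).mp hA.isUnit)]
  simpa using (PosDef.fromBlocks₁₁ 1 A⁻¹ hB).mp (by simpa using hblock)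

end Matrix

open scoped MatrixOrder

theorem riccati_upper_bound_propagation_general
    (n : ℕ) (F Q Θdag Pbar P Θ : Matrix (Fin n) (Fin n) ℝ)
    (κ qbar : ℝ) (hκ : 0 < κ ∧ κ < 1)
    (hΘdag : Θdag.PosSemidef)
    (hPbar : Pbar.PosDef)
    (hfix : Pbar = F * (Pbar⁻¹ + ((1 : ℝ) - κ) • Θdag)⁻¹ * Fᵀ + qbar • (1 : Matrix (Fin n) (Fin n) ℝ))
    (hqQ : (qbar • (1 : Matrix (Fin n) (Fin n) ℝ) - Q).PosSemidef)
    (hP : P.PosDef) (hPle : (Pbar - P).PosSemidef)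
    (hΘge : (Θ - ((1 : ℝ) - κ) • Θdag).PosSemidef) :
    (Pbar - (F * (P⁻¹ + Θ)⁻¹ * Fᵀ + Q)).PosSemidef := by
  have hfloor : (Pbar⁻¹ + ((1 : ℝ) - κ) • Θdag).PosDef :=
    hPbar.inv.add_posSemidef (hΘdag.smul (by linarith [hκ.2]))
  have hinfo : Pbar⁻¹ + ((1 : ℝ) - κ) • Θdag ≤ P⁻¹ + Θ :=
    add_le_add (hP.posSemidef_inv_sub_inv hPle) hΘge
  have hcov : (P⁻¹ + Θ)⁻¹ ≤ (Pbar⁻¹ + ((1 : ℝ) - κ) • Θdag)⁻¹ :=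
    hfloor.posSemidef_inv_sub_inv hinfo
  show _ ≤ Pbar
  calc F * (P⁻¹ + Θ)⁻¹ * Fᵀ + Q
      ≤ F * (Pbar⁻¹ + ((1 : ℝ) - κ) • Θdag)⁻¹ * Fᵀ + qbar • 1 := by
        rw [← conjTranspose_eq_transpose_of_trivial]
        exact add_le_add (star_right_conjugate_le_conjugate hcov F) hqQ
    _ = Pbar := hfix.symm

/-- a fixed point `P̄` of the Riccati-type map with floor information
rate `(1−κ)Θ†` and inflated noise `q̄ I ≥ Q` propagates as an upper bound. -/
theorem riccati_upper_bound_propagation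
    (n : ℕ) (F Q Θdag Pbar P Θ : Matrix (Fin n) (Fin n) ℝ)
    (κ qbar : ℝ) (hκ : 0 < κ ∧ κ < 1) (hqbar : 0 < qbar)
    (hQ : Q.PosDef) (hΘdag : Θdag.PosSemidef)
    (hPbar : Pbar.PosDef)
    (hfix : Pbar = F * (Pbar⁻¹ + ((1 : ℝ) - κ) • Θdag)⁻¹ * Fᵀ + qbar • (1 : Matrix (Fin n) (Fin n) ℝ))
    (hqQ : (qbar • (1 : Matrix (Fin n) (Fin n) ℝ) - Q).PosSemidef)
    (hP : P.PosDef) (hPle : (Pbar - P).PosSemidef)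
    (hΘsymm : Θ.IsSymm)
    (hΘge : (Θ - ((1 : ℝ) - κ) • Θdag).PosSemidef) :
    (Pbar - (F * (P⁻¹ + Θ)⁻¹ * Fᵀ + Q)).PosSemidef :=
  riccati_upper_bound_propagation_general n F Q Θdag Pbar P Θ κ qbar hκ hΘdag hPbar hfix hqQ hP hPle
    hΘge
end

section
/- Perturbation bound for the covariance update: if 0 < p̲ I ≤ P ≤ p̄ I, Θ₁, Θ₂ are symmetric PSD, and ‖F‖ ≤ f̄, then ‖F(P⁻¹+Θ₁)⁻¹Fᵀ − F(P⁻¹+Θ₂)⁻¹Fᵀ‖ ≤ f̄² p̄² ‖Θ₂ − Θ₁‖ (operator norm). -/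
/-!
By the resolvent identity the difference equals `F A₁⁻¹ (Θ₂ - Θ₁) A₂⁻¹ Fᵀ` with
`Aⱼ = P⁻¹ + Θⱼ`, so by submultiplicativity of the operator norm it suffices that
`‖Aⱼ⁻¹‖ ≤ p̄`. In the Loewner order `0 ≤ Aⱼ⁻¹ ≤ P ≤ p̄ I`, where the middle inequality comes
from the congruence `P - A⁻¹ = A⁻¹ (Θ + Θ P Θ) A⁻¹` for `A = P⁻¹ + Θ`; a positive semidefinite
matrix below `p̄ I` has spectrum in `[0, p̄]`, hence norm at most `p̄`.
-/

open Matrix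
open scoped Matrix.Norms.L2Operator MatrixOrder ComplexOrder

namespace Matrix

variable {n 𝕜 : Type*} [DecidableEq n] [RCLike 𝕜]

lemma posDef_of_smul_one_le {P : Matrix n n 𝕜} {c : ℝ} (hc : 0 < c) (h : c • 1 ≤ P) :
    P.PosDef := by
  simpa using PosDef.posSemidef_add (le_iff.mp h) (PosDef.one.smul hc)

variable [Fintype n]

lemma PosDef.inv_inv_add_le {P Θ : Matrix n n 𝕜} (hP : P.PosDef) (hΘ : Θ.PosSemidef) :
    (P⁻¹ + Θ)⁻¹ ≤ P := by
  set A := P⁻¹ + Θ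
  have hA : A.PosDef := hP.inv.add_posSemidef hΘ
  have hPdet : IsUnit P.det := (isUnit_iff_isUnit_det P).mp hP.isUnit
  have key : P - A⁻¹ = A⁻¹ * (Θ + Θ * P * Θ) * A⁻¹ᴴ :=
    calc P - A⁻¹ = P * Θ * A⁻¹ := by
          have := inv_sub_inv (A := P⁻¹) (B := A) (by simp [hP.inv.isUnit, hA.isUnit])
          rwa [nonsing_inv_nonsing_inv P hPdet, add_sub_cancel_left] at this
      _ = A⁻¹ * (A * P) * Θ * A⁻¹ := by
          rw [← mul_assoc, nonsing_inv_mul _ ((isUnit_iff_isUnit_det A).mp hA.isUnit), one_mul]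
      _ = A⁻¹ * (Θ + Θ * P * Θ) * A⁻¹ᴴ := by
          rw [add_mul, nonsing_inv_mul _ hPdet, hA.inv.isHermitian.eq]
          noncomm_ring
  rw [le_iff, key]
  have hΘPΘ := hP.posSemidef.mul_mul_conjTranspose_same Θ
  rw [hΘ.isHermitian.eq] at hΘPΘ
  exact (hΘ.add hΘPΘ).mul_mul_conjTranspose_same _

lemma l2_opNorm_le_of_le_smul_one {A : Matrix n n ℝ} {c : ℝ} (hc : 0 ≤ c) (hA : 0 ≤ A)
    (hAc : A ≤ c • 1) : ‖A‖ ≤ c := by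
  rw [← Algebra.algebraMap_eq_smul_one] at hAc
  have hspec := (le_algebraMap_iff_spectrum_le (IsSelfAdjoint.of_nonneg hA)).1 hAc
  rw [← cfc_id' ℝ A]
  refine norm_cfc_le hc fun x hx => ?_
  rw [Real.norm_of_nonneg (spectrum_nonneg_of_nonneg hA hx)]
  exact hspec x hx

lemma l2_opNorm_inv_inv_add_le {P Θ : Matrix n n ℝ} {c : ℝ} (hc : 0 ≤ c) (hP : P.PosDef)
    (hΘ : Θ.PosSemidef) (hPc : P ≤ c • 1) : ‖(P⁻¹ + Θ)⁻¹‖ ≤ c :=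
  l2_opNorm_le_of_le_smul_one hc (hP.inv.add_posSemidef hΘ).inv.posSemidef.nonneg
    ((hP.inv_inv_add_le hΘ).trans hPc)

end Matrix

lemma norm_mul_mul_star_le {A : Type*} [NonUnitalNormedRing A] [StarRing A] [NormedStarGroup A]
    (a m : A) : ‖a * m * star a‖ ≤ ‖a‖ ^ 2 * ‖m‖ := by
  calc ‖a * m * star a‖ ≤ ‖a‖ * ‖m‖ * ‖star a‖ := norm_mul₃_le
    _ = ‖a‖ ^ 2 * ‖m‖ := by rw [norm_star]; ring

theorem covariance_update_perturbation_bound_general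
    (n : ℕ) (P Θ₁ Θ₂ F : Matrix (Fin n) (Fin n) ℝ)
    (pmin pmax fbar : ℝ) (hpmin : 0 < pmin) (hple : pmin ≤ pmax)
    (hPlow : (P - pmin • (1 : Matrix (Fin n) (Fin n) ℝ)).PosSemidef)
    (hPhigh : (pmax • (1 : Matrix (Fin n) (Fin n) ℝ) - P).PosSemidef)
    (hΘ₁ : Θ₁.PosSemidef) (hΘ₂ : Θ₂.PosSemidef)
    (hF : ‖F‖ ≤ fbar) :
    ‖F * (P⁻¹ + Θ₁)⁻¹ * Fᵀ - F * (P⁻¹ + Θ₂)⁻¹ * Fᵀ‖ ≤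
      fbar ^ 2 * pmax ^ 2 * ‖Θ₂ - Θ₁‖ := by
  have hP : P.PosDef := posDef_of_smul_one_le hpmin hPlow
  have hpmax : 0 ≤ pmax := hpmin.le.trans hple
  have hres : (P⁻¹ + Θ₁)⁻¹ - (P⁻¹ + Θ₂)⁻¹ = (P⁻¹ + Θ₁)⁻¹ * (Θ₂ - Θ₁) * (P⁻¹ + Θ₂)⁻¹ := by
    rw [Matrix.inv_sub_inv (by simp [(hP.inv.add_posSemidef hΘ₁).isUnit,
      (hP.inv.add_posSemidef hΘ₂).isUnit]), add_sub_add_left_eq_sub]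
  rw [← sub_mul, ← mul_sub, hres, ← conjTranspose_eq_transpose_of_trivial,
    ← star_eq_conjTranspose]
  calc _ ≤ ‖F‖ ^ 2 * ‖(P⁻¹ + Θ₁)⁻¹ * (Θ₂ - Θ₁) * (P⁻¹ + Θ₂)⁻¹‖ := norm_mul_mul_star_le _ _
    _ ≤ fbar ^ 2 * (pmax * ‖Θ₂ - Θ₁‖ * pmax) := by
      gcongr
      refine norm_mul₃_le.trans ?_
      gcongr
      exacts [l2_opNorm_inv_inv_add_le hpmax hP hΘ₁ hPhigh,
        l2_opNorm_inv_inv_add_le hpmax hP hΘ₂ hPhigh]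
    _ = fbar ^ 2 * pmax ^ 2 * ‖Θ₂ - Θ₁‖ := by ring

/-- perturbation bound for the covariance update, in the L2 operator norm. -/
theorem covariance_update_perturbation_bound
    (n : ℕ) (P Θ₁ Θ₂ F : Matrix (Fin n) (Fin n) ℝ)
    (pmin pmax fbar : ℝ) (hpmin : 0 < pmin) (hple : pmin ≤ pmax)
    (hPsymm : P.IsSymm)
    (hPlow : (P - pmin • (1 : Matrix (Fin n) (Fin n) ℝ)).PosSemidef)
    (hPhigh : (pmax • (1 : Matrix (Fin n) (Fin n) ℝ) - P).PosSemidef)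
    (hΘ₁ : Θ₁.PosSemidef) (hΘ₂ : Θ₂.PosSemidef)
    (hF : ‖F‖ ≤ fbar) :
    ‖F * (P⁻¹ + Θ₁)⁻¹ * Fᵀ - F * (P⁻¹ + Θ₂)⁻¹ * Fᵀ‖ ≤
      fbar ^ 2 * pmax ^ 2 * ‖Θ₂ - Θ₁‖ :=
  covariance_update_perturbation_bound_general n P Θ₁ Θ₂ F pmin pmax fbar hpmin hple hPlow hPhigh
    hΘ₁ hΘ₂ hF
end
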